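/- arXiv:1007.3089 — 2 statements merged into one kernel-verified Lean document; each statement's English description precedes it below -/
import Mathlib

section
/- Let $\sigma$ be a weight, $1 < r < \infty$, and $f \geq 0$ with $f \in L^r(\sigma)$, and suppose $M_\sigma f$ is finite a.e. Given any collection $\mathcal{S}$ of dyadic cubes with finite $\sigma$-measure, there exists a subcollection $\mathcal{G} \subseteq \mathcal{S}$ ('principal cubes') such that: (i) every $Q \in \mathcal{S}$ is contained in some $G \in \mathcal{G}$ with $\mathbb{E}^\sigma_Q f \leq 2\, \mathbb{E}^\sigma_G f$; and (ii) if $G, G' \in \mathcal{G}$ with $G \subsetneq G'$, then $2\, \mathbb{E}^\sigma_{G'} f < \mathbb{E}^\sigma_G f$. -/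
open MeasureTheory Set

/-- The half-open dyadic cube of generation `k` (side length `2^(-k)`) at position `m`. -/
def dyadicCube (d : ℕ) (k : ℤ) (m : Fin d → ℤ) : Set (Fin d → ℝ) :=
  {x | ∀ i, (m i : ℝ) * 2 ^ (-k) ≤ x i ∧ x i < ((m i : ℝ) + 1) * 2 ^ (-k)}

/-- Index of the dyadic parent of the dyadic cube indexed by `(k, m)`. -/
def dyadicParentIdx (d : ℕ) : ℤ × (Fin d → ℤ) → ℤ × (Fin d → ℤ) :=
  fun p => (p.1 - 1, fun i => Int.fdiv (p.2 i) 2)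

/-- The dyadic cube corresponding to an index pair. -/
def cubeOf (d : ℕ) (p : ℤ × (Fin d → ℤ)) : Set (Fin d → ℝ) := dyadicCube d p.1 p.2

/-- The dyadic parent of the cube indexed by `p`. -/
def parentCubeOf (d : ℕ) (p : ℤ × (Fin d → ℤ)) : Set (Fin d → ℝ) :=
  cubeOf d (dyadicParentIdx d p)

/-- The dyadic grandparent of the cube indexed by `p`. -/
def grandparentCubeOf (d : ℕ) (p : ℤ × (Fin d → ℤ)) : Set (Fin d → ℝ) :=
  cubeOf d (dyadicParentIdx d (dyadicParentIdx d p))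

/-- The dyadic weighted maximal function with respect to the measure `μ = σ dx`. -/
noncomputable def dyadicMaximal (d : ℕ) (μ : MeasureTheory.Measure (Fin d → ℝ))
    (g : (Fin d → ℝ) → ENNReal) (x : Fin d → ℝ) : ENNReal :=
  ⨆ p : ℤ × (Fin d → ℤ),
    (cubeOf d p).indicator
      (fun _ => (μ (cubeOf d p))⁻¹ * ∫⁻ y in cubeOf d p, g y ∂μ) x

/-! The principal cubes are selected by a stopping time run downwards from the maximal cubes of
`𝒮`: a cube is principal when its average exceeds twice the average of its nearest principal
ancestor. The recursion is well founded because a cube of `𝒮` has only finitely many ancestors in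
`𝒮`: one dyadic cube per generation between its own and that of a maximal cube above it. A cube
that is not principal fails the test against some nearest principal ancestor, which gives (i);
along a chain of principal cubes the averages more than double at each step, which gives (ii). -/

open scoped ENNReal

section Principal

variable {α : Type*} [PartialOrder α]

/-- The stopping time run down from the maximal elements: `S` is principal when `2 * a T < a S`
for every nearest principal `T > S` (see `isPrincipal_iff`), so maximal elements are principal. -/
def IsPrincipal [WellFoundedGT α] (a : α → ℝ≥0∞) : α → Prop :=
  WellFoundedGT.fix fun S isPrincipalAbove =>
    ∀ T (hST : S < T), isPrincipalAbove T hST →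
      (∀ U (hSU : S < U), isPrincipalAbove U hSU → U ≤ T → T ≤ U) → 2 * a T < a S

variable {a : α → ℝ≥0∞}

theorem isPrincipal_iff [WellFoundedGT α] {S : α} :
    IsPrincipal a S ↔ ∀ T, Minimal (fun T => S < T ∧ IsPrincipal a T) T → 2 * a T < a S := by
  rw [IsPrincipal, WellFoundedGT.fix_eq]
  exact ⟨fun h T hT => h T hT.1.1 hT.1.2 fun U hSU hU => hT.2 ⟨hSU, hU⟩,
    fun h T hST hT hmin => h T ⟨⟨hST, hT⟩, fun U hU => hmin U hU.1 hU.2⟩⟩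

theorem exists_isPrincipal_ge_le_two_mul [WellFoundedGT α] (S : α) :
    ∃ G, IsPrincipal a G ∧ S ≤ G ∧ a S ≤ 2 * a G := by
  by_cases hS : IsPrincipal a S
  · exact ⟨S, hS, le_rfl, le_mul_of_one_le_left' one_le_two⟩
  rw [isPrincipal_iff] at hS
  push Not at hS
  obtain ⟨T, hT, hST⟩ := hS
  exact ⟨T, hT.1.2, hT.1.1.le, hST⟩

theorem wellFoundedGT_of_finite_Ici (hfin : ∀ S : α, (Ici S).Finite) : WellFoundedGT α :=
  StrictAnti.wellFoundedGT (f := fun S => (Ici S).ncard) fun _ _ h =>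
    ncard_lt_ncard (Ici_ssubset_Ici.2 h) (hfin _)

theorem two_mul_lt_of_isPrincipal_of_lt [WellFoundedGT α] (hfin : ∀ S : α, (Ici S).Finite)
    {G G' : α} (hG : IsPrincipal a G) (hG' : IsPrincipal a G') (hGG' : G < G') :
    2 * a G' < a G := by
  induction G using WellFoundedGT.induction with
  | ind G ih =>
  obtain ⟨T, hTG', hT⟩ := ((hfin G).subset fun T (hT : G < T ∧ _) => hT.1.le).exists_le_minimal
    (⟨hGG', hG'⟩ : G < G' ∧ IsPrincipal a G')
  have hGT : 2 * a T < a G := isPrincipal_iff.1 hG T hT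
  obtain rfl | hTG' := hTG'.eq_or_lt
  · exact hGT
  calc 2 * a G' < a T := ih T hT.1.1 hT.1.2 hTG'
    _ ≤ 2 * a T := le_mul_of_one_le_left' one_le_two
    _ < a G := hGT

theorem exists_principal_of_finite_Ici (hfin : ∀ S : α, (Ici S).Finite) (a : α → ℝ≥0∞) :
    ∃ P : Set α, (∀ S, ∃ G ∈ P, S ≤ G ∧ a S ≤ 2 * a G) ∧
      ∀ G ∈ P, ∀ G' ∈ P, G < G' → 2 * a G' < a G :=
  have := wellFoundedGT_of_finite_Ici hfin
  ⟨{S | IsPrincipal a S}, exists_isPrincipal_ge_le_two_mul,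
    fun _ hG _ hG' => two_mul_lt_of_isPrincipal_of_lt hfin hG hG'⟩

end Principal

section Dyadic

variable {d : ℕ}

theorem mem_cubeOf_iff {x : Fin d → ℝ} {p : ℤ × (Fin d → ℤ)} :
    x ∈ cubeOf d p ↔ ∀ i, ⌊x i * 2 ^ p.1⌋ = p.2 i := by
  have h2 : (0 : ℝ) < 2 ^ p.1 := by positivity
  simp only [cubeOf, dyadicCube, mem_ofPred_eq, Int.floor_eq_iff, zpow_neg, ← div_eq_mul_inv,
    div_le_iff₀ h2, lt_div_iff₀ h2]

theorem cubeOf_nonempty (p : ℤ × (Fin d → ℤ)) : (cubeOf d p).Nonempty :=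
  ⟨fun i => p.2 i / 2 ^ p.1, mem_cubeOf_iff.2 fun i => by
    rw [div_mul_cancel₀ _ (by positivity), Int.floor_intCast]⟩

/-- The dyadic cube of generation `k` containing `x`. -/
def cubeAt (x : Fin d → ℝ) (k : ℤ) : Set (Fin d → ℝ) :=
  cubeOf d (k, fun i => ⌊x i * 2 ^ k⌋)

theorem cubeOf_eq_cubeAt {x : Fin d → ℝ} {p : ℤ × (Fin d → ℤ)} (hx : x ∈ cubeOf d p) :
    cubeOf d p = cubeAt x p.1 := by
  rw [cubeAt, funext (mem_cubeOf_iff.1 hx)]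

theorem floor_mul_two_zpow_add_div_two_pow (t : ℝ) (k : ℤ) (n : ℕ) :
    ⌊t * 2 ^ (k + n)⌋ / 2 ^ n = ⌊t * 2 ^ k⌋ := by
  have : t * 2 ^ k = t * 2 ^ (k + n) / (2 ^ n : ℕ) := by
    rw [zpow_add₀ two_ne_zero, zpow_natCast]; push_cast; field_simp
  rw [this, Int.floor_div_natCast]; push_cast; rfl

theorem cubeAt_antitone (x : Fin d → ℝ) : Antitone (cubeAt x) := by
  intro k k' hk y hy
  obtain ⟨n, rfl⟩ := Int.exists_add_of_le hk
  rw [cubeAt, mem_cubeOf_iff] at hy ⊢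
  intro i
  have hdiv := congrArg (· / 2 ^ n) (hy i)
  simpa only [floor_mul_two_zpow_add_div_two_pow] using hdiv

theorem finite_cubeOf_image_inter_Ici {𝒮 : Set (ℤ × (Fin d → ℤ))} {q g : ℤ × (Fin d → ℤ)}
    (hqg : cubeOf d q ⊆ cubeOf d g)
    (hgmax : ∀ G' ∈ 𝒮, cubeOf d g ⊆ cubeOf d G' → cubeOf d g = cubeOf d G') :
    (cubeOf d '' 𝒮 ∩ Ici (cubeOf d q)).Finite := by
  obtain ⟨x, hx⟩ := cubeOf_nonempty q
  refine ((finite_uIcc g.1 q.1).image (cubeAt x)).subset ?_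
  rintro _ ⟨⟨p, hp, rfl⟩, hqp : cubeOf d q ⊆ cubeOf d p⟩
  have hgmaxp := hgmax p hp
  have hxp := hqp hx
  rw [cubeOf_eq_cubeAt hxp] at hgmaxp hqp ⊢
  rw [cubeOf_eq_cubeAt (hqg hx)] at hgmaxp
  rw [cubeOf_eq_cubeAt hx] at hqp
  rcases le_total p.1 g.1 with hpg | hgp
  · exact ⟨g.1, left_mem_uIcc, hgmaxp (cubeAt_antitone x hpg)⟩
  rcases le_total q.1 p.1 with hqp' | hpq
  · exact ⟨q.1, right_mem_uIcc, hqp.antisymm (cubeAt_antitone x hqp')⟩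
  · exact ⟨p.1, Icc_subset_uIcc ⟨hgp, hpq⟩, rfl⟩

end Dyadic

theorem principal_cubes_exist_general {d : ℕ}
    (μ : MeasureTheory.Measure (Fin d → ℝ))
    (f : (Fin d → ℝ) → ENNReal)
    (𝒮 : Set (ℤ × (Fin d → ℤ)))
    (hmax : ∀ Q ∈ 𝒮, ∃ G ∈ 𝒮, cubeOf d Q ⊆ cubeOf d G ∧
      ∀ G' ∈ 𝒮, cubeOf d G ⊆ cubeOf d G' → cubeOf d G = cubeOf d G') :
    ∃ 𝒢 ⊆ 𝒮,
      (∀ Q ∈ 𝒮, ∃ G ∈ 𝒢, cubeOf d Q ⊆ cubeOf d G ∧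
        (μ (cubeOf d Q))⁻¹ * ∫⁻ x in cubeOf d Q, f x ∂μ ≤
          2 * ((μ (cubeOf d G))⁻¹ * ∫⁻ x in cubeOf d G, f x ∂μ)) ∧
      (∀ G ∈ 𝒢, ∀ G' ∈ 𝒢, cubeOf d G ⊂ cubeOf d G' →
        2 * ((μ (cubeOf d G'))⁻¹ * ∫⁻ x in cubeOf d G', f x ∂μ) <
          (μ (cubeOf d G))⁻¹ * ∫⁻ x in cubeOf d G, f x ∂μ) := by
  set C := cubeOf d '' 𝒮
  have hfin : ∀ S : C, (Ici S).Finite := by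
    rintro ⟨_, q, hq, rfl⟩
    obtain ⟨g, -, hqg, hgmax⟩ := hmax q hq
    exact ((finite_cubeOf_image_inter_Ici hqg hgmax).preimage
      Subtype.val_injective.injOn).subset fun T hT => ⟨T.2, hT⟩
  obtain ⟨P, hcover, hdouble⟩ :=
    exists_principal_of_finite_Ici hfin fun S => (μ S)⁻¹ * ∫⁻ x in S, f x ∂μ
  refine ⟨{p | ∃ hp : p ∈ 𝒮, ⟨cubeOf d p, mem_image_of_mem _ hp⟩ ∈ P}, fun p hp => hp.1, ?_, ?_⟩
  · intro Q hQ
    obtain ⟨⟨_, g, hg, rfl⟩, hG, hQG, havg⟩ := hcover ⟨cubeOf d Q, mem_image_of_mem _ hQ⟩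
    exact ⟨g, ⟨hg, hG⟩, hQG, havg⟩
  · rintro G ⟨_, hG⟩ G' ⟨_, hG'⟩ hGG'
    exact hdouble _ hG _ hG' hGG'

/-- construction of the principal cubes: given a collection `𝒮` of
dyadic cubes (each contained in a maximal cube of `𝒮`), there is a subcollection
`𝒢 ⊆ 𝒮` such that every `Q ∈ 𝒮` sits inside some `G ∈ 𝒢` with
`𝔼^σ_Q f ≤ 2 𝔼^σ_G f`, and the averages on nested principal cubes double. -/
theorem principal_cubes_exist {d : ℕ} (σ : (Fin d → ℝ) → ENNReal)
    (hσmeas : Measurable σ) (hσpos : ∀ x, 0 < σ x)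
    (μ : MeasureTheory.Measure (Fin d → ℝ))
    (hμ : μ = MeasureTheory.volume.withDensity σ)
    (r : ℝ) (hr : 1 < r)
    (f : (Fin d → ℝ) → ENNReal) (hfmeas : Measurable f)
    (hfLr : (∫⁻ x, f x ^ r ∂μ) < ⊤)
    (hMfin : ∀ᵐ x ∂μ, dyadicMaximal d μ f x < ⊤)
    (𝒮 : Set (ℤ × (Fin d → ℤ)))
    (h𝒮fin : ∀ Q ∈ 𝒮, μ (cubeOf d Q) < ⊤)
    (hmax : ∀ Q ∈ 𝒮, ∃ G ∈ 𝒮, cubeOf d Q ⊆ cubeOf d G ∧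
      ∀ G' ∈ 𝒮, cubeOf d G ⊆ cubeOf d G' → cubeOf d G = cubeOf d G') :
    ∃ 𝒢 ⊆ 𝒮,
      (∀ Q ∈ 𝒮, ∃ G ∈ 𝒢, cubeOf d Q ⊆ cubeOf d G ∧
        (μ (cubeOf d Q))⁻¹ * ∫⁻ x in cubeOf d Q, f x ∂μ ≤
          2 * ((μ (cubeOf d G))⁻¹ * ∫⁻ x in cubeOf d G, f x ∂μ)) ∧
      (∀ G ∈ 𝒢, ∀ G' ∈ 𝒢, cubeOf d G ⊂ cubeOf d G' →
        2 * ((μ (cubeOf d G'))⁻¹ * ∫⁻ x in cubeOf d G', f x ∂μ) <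
          (μ (cubeOf d G))⁻¹ * ∫⁻ x in cubeOf d G, f x ∂μ) :=
  principal_cubes_exist_general μ f 𝒮 hmax
end

section
/- With the hypotheses of the maximum principle (Whitney cube $Q$ for $\Omega_k = \{\overline{T}(f\sigma) > 2^k\}$ with $Q^{(2)} \cap \Omega_k^c \neq \emptyset$), for every $x \in Q \cap (\Omega_{k+2} \setminus \Omega_{k+3})$ one has $2^k \leq \overline{T}^{in}_{Q^{(1)}}(\mathbf{1}_{Q^{(1)}} f\sigma)(x)$, where $\overline{T}^{in}_{Q^{(1)}}$ denotes the restriction of the sum defining $\overline{T}$ to cubes $R \in \mathcal{Q}$ with $R \subseteq Q^{(1)}$. -/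
open MeasureTheory Set

/-- The dyadic operator `T̄` restricted to the indices in `S`. -/
noncomputable def TbarOn (d : ℕ) (q : ℝ) (R : ℕ → ℤ × (Fin d → ℤ)) (τ : ℕ → ENNReal)
    (S : Set ℕ) (h : (Fin d → ℝ) → ENNReal) (x : Fin d → ℝ) : ENNReal :=
  (∑' n : S, (τ n * ((MeasureTheory.volume (cubeOf d (R n)))⁻¹ *
      ∫⁻ y in cubeOf d (R n), h y) *
      (cubeOf d (R n)).indicator (fun _ => (1 : ENNReal)) x) ^ q) ^ (1 / q)

/-!
A dyadic cube containing `x ∈ Q` is either contained in `Q⁽¹⁾` or contains `Q⁽²⁾`. So the part of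
`T̄(fσ)(x)` coming from cubes not contained in `Q⁽¹⁾` is dominated termwise by `T̄(fσ)(z)` for the
point `z ∈ Q⁽²⁾` where `T̄(fσ)(z) ≤ 2^k`. Since the `ℓ^q` sum is subadditive under splitting the
index set, `2^(k+2) < T̄(fσ)(x) ≤ T̄^in(x) + 2^k`, which forces `2^k ≤ T̄^in(x)`.
-/

open scoped ENNReal

lemma Int.floor_mul_two_zpow_of_le (a : ℝ) {l k : ℤ} (h : l ≤ k) :
    ⌊a * 2 ^ l⌋ = ⌊a * 2 ^ k⌋ / 2 ^ (k - l).toNat := by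
  obtain ⟨N, rfl⟩ : ∃ N : ℕ, k = l + N := ⟨(k - l).toNat, by omega⟩
  have hscale : a * 2 ^ l = a * 2 ^ (l + N) / ((2 ^ N : ℕ) : ℝ) := by
    rw [zpow_add₀ two_ne_zero, zpow_natCast]
    push_cast
    field_simp
  rw [hscale, Int.floor_div_natCast]
  simp

section Dyadic

variable {d : ℕ}

lemma mem_dyadicCube_iff {k : ℤ} {m : Fin d → ℤ} {x : Fin d → ℝ} :
    x ∈ dyadicCube d k m ↔ ∀ i, ⌊x i * 2 ^ k⌋ = m i := by
  have h2 : (0 : ℝ) < 2 ^ k := zpow_pos two_pos k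
  refine forall_congr' fun i => ?_
  rw [Int.floor_eq_iff, zpow_neg, ← div_eq_mul_inv, ← div_eq_mul_inv,
    div_le_iff₀ h2, lt_div_iff₀ h2]

lemma measurableSet_cubeOf (p : ℤ × (Fin d → ℤ)) : MeasurableSet (cubeOf d p) := by
  have : cubeOf d p = ⋂ i, (fun x : Fin d → ℝ => x i) ⁻¹'
      Ico ((p.2 i : ℝ) * 2 ^ (-p.1)) (((p.2 i : ℝ) + 1) * 2 ^ (-p.1)) := by
    ext x; simp [cubeOf, dyadicCube]
  rw [this]
  exact .iInter fun i => measurableSet_Ico.preimage (measurable_pi_apply i)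

lemma cubeOf_subset_of_le {p p' : ℤ × (Fin d → ℤ)} (hle : p'.1 ≤ p.1) {x : Fin d → ℝ}
    (hx : x ∈ cubeOf d p) (hx' : x ∈ cubeOf d p') : cubeOf d p ⊆ cubeOf d p' := by
  intro y hy
  simp only [cubeOf, mem_dyadicCube_iff] at hx hx' hy ⊢
  intro i
  rw [← hx' i, Int.floor_mul_two_zpow_of_le _ hle, Int.floor_mul_two_zpow_of_le _ hle, hx i, hy i]

lemma cubeOf_subset_parentCubeOf (p : ℤ × (Fin d → ℤ)) : cubeOf d p ⊆ parentCubeOf d p := by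
  intro x hx
  simp only [parentCubeOf, cubeOf, dyadicParentIdx, mem_dyadicCube_iff] at hx ⊢
  intro i
  rw [Int.floor_mul_two_zpow_of_le _ (sub_le_self p.1 zero_le_one), hx i,
    Int.fdiv_eq_ediv_of_nonneg _ zero_le_two]
  simp

lemma grandparentCubeOf_subset_of_not_subset_parentCubeOf {Q p : ℤ × (Fin d → ℤ)}
    {x : Fin d → ℝ} (hxQ : x ∈ cubeOf d Q) (hxp : x ∈ cubeOf d p)
    (hp : ¬ cubeOf d p ⊆ parentCubeOf d Q) : grandparentCubeOf d Q ⊆ cubeOf d p := by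
  have hxQ₁ := cubeOf_subset_parentCubeOf Q hxQ
  by_cases hgen : p.1 ≤ Q.1 - 2
  · exact cubeOf_subset_of_le (by simp [dyadicParentIdx]; omega)
      (cubeOf_subset_parentCubeOf _ hxQ₁) hxp
  · exact absurd (cubeOf_subset_of_le (by simp [dyadicParentIdx]; omega) hxp hxQ₁) hp

end Dyadic

section Operator

variable {d : ℕ} {q : ℝ} {R : ℕ → ℤ × (Fin d → ℤ)} {τ : ℕ → ℝ≥0∞} {S T : Set ℕ}
  {h : (Fin d → ℝ) → ℝ≥0∞} {x z : Fin d → ℝ}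

noncomputable def tbarTerm (d : ℕ) (R : ℕ → ℤ × (Fin d → ℤ)) (τ : ℕ → ℝ≥0∞)
    (h : (Fin d → ℝ) → ℝ≥0∞) (n : ℕ) (x : Fin d → ℝ) : ℝ≥0∞ :=
  τ n * ((volume (cubeOf d (R n)))⁻¹ * ∫⁻ y in cubeOf d (R n), h y) *
    (cubeOf d (R n)).indicator (fun _ => 1) x

lemma TbarOn_eq : TbarOn d q R τ S h x = (∑' n : S, tbarTerm d R τ h n x ^ q) ^ (1 / q) := rfl

lemma TbarOn_mono_set (hq : 0 ≤ q) (hST : S ⊆ T) : TbarOn d q R τ S h x ≤ TbarOn d q R τ T h x :=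
  ENNReal.rpow_le_rpow (ENNReal.tsum_mono_subtype (fun n => tbarTerm d R τ h n x ^ q) hST)
    (by positivity)

lemma TbarOn_le_of_mem_imp_mem (hq : 0 ≤ q)
    (hxz : ∀ n ∈ S, x ∈ cubeOf d (R n) → z ∈ cubeOf d (R n)) :
    TbarOn d q R τ S h x ≤ TbarOn d q R τ S h z := by
  refine ENNReal.rpow_le_rpow (ENNReal.tsum_le_tsum fun n => ?_) (by positivity)
  refine ENNReal.rpow_le_rpow (mul_le_mul_right ?_ _) hq
  by_cases hxn : x ∈ cubeOf d (R n)
  · simp [indicator_of_mem hxn, indicator_of_mem (hxz n n.2 hxn)]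
  · simp [indicator_of_notMem hxn]

lemma TbarOn_indicator {A : Set (Fin d → ℝ)} (hS : ∀ n ∈ S, cubeOf d (R n) ⊆ A) :
    TbarOn d q R τ S (A.indicator h) x = TbarOn d q R τ S h x := by
  simp only [TbarOn_eq, tbarTerm]
  congr 1
  refine tsum_congr fun n => ?_
  rw [setLIntegral_congr_fun (measurableSet_cubeOf _)
    fun y hy => indicator_of_mem (hS n n.2 hy) h]

lemma TbarOn_univ_le_add_compl (hq : 1 ≤ q) (S : Set ℕ) :
    TbarOn d q R τ univ h x ≤ TbarOn d q R τ S h x + TbarOn d q R τ Sᶜ h x := by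
  simp only [TbarOn_eq]
  rw [tsum_univ (f := fun n => tbarTerm d R τ h n x ^ q),
    ← ENNReal.summable.tsum_add_tsum_compl (s := S) ENNReal.summable]
  exact ENNReal.rpow_add_le_add_rpow _ _ (by positivity) (div_le_one_of_le₀ hq (by positivity))

end Operator

lemma ENNReal.two_rpow_add_two_rpow_le (k : ℝ) : (2 : ℝ≥0∞) ^ k + 2 ^ k ≤ 2 ^ (k + 2) := by
  rw [← two_mul, ENNReal.rpow_add _ _ two_ne_zero ENNReal.ofNat_ne_top, mul_comm]
  gcongr
  norm_num

theorem Tbar_inner_lower_bound_general {d : ℕ} (q : ℝ) (hq : 1 ≤ q)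
    (R : ℕ → ℤ × (Fin d → ℤ)) (τ : ℕ → ENNReal)
    (σ f : (Fin d → ℝ) → ENNReal)
    (k : ℤ) (Q : ℤ × (Fin d → ℤ))
    (hwhitney : ∃ z ∈ grandparentCubeOf d Q,
      TbarOn d q R τ Set.univ (fun y => f y * σ y) z ≤ (2 : ENNReal) ^ (k : ℝ))
    (x : Fin d → ℝ) (hx : x ∈ cubeOf d Q)
    (hx2 : (2 : ENNReal) ^ ((k : ℝ) + 2) <
      TbarOn d q R τ Set.univ (fun y => f y * σ y) x) :
    (2 : ENNReal) ^ (k : ℝ) ≤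
      TbarOn d q R τ {n | cubeOf d (R n) ⊆ parentCubeOf d Q}
        ((parentCubeOf d Q).indicator (fun y => f y * σ y)) x := by
  obtain ⟨z, hz, hzk⟩ := hwhitney
  set S := {n | cubeOf d (R n) ⊆ parentCubeOf d Q}
  set g := fun y => f y * σ y
  have hq₀ : 0 ≤ q := zero_le_one.trans hq
  have hout : TbarOn d q R τ Sᶜ g x ≤ 2 ^ (k : ℝ) := calc
    TbarOn d q R τ Sᶜ g x ≤ TbarOn d q R τ Sᶜ g z := TbarOn_le_of_mem_imp_mem hq₀ fun n hn hxn =>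
        grandparentCubeOf_subset_of_not_subset_parentCubeOf hx hxn hn hz
    _ ≤ TbarOn d q R τ univ g z := TbarOn_mono_set hq₀ (subset_univ _)
    _ ≤ 2 ^ (k : ℝ) := hzk
  rw [TbarOn_indicator (S := S) fun n hn => hn]
  by_contra! hin
  refine (hx2.trans_le ?_).false
  calc TbarOn d q R τ univ g x ≤ TbarOn d q R τ S g x + TbarOn d q R τ Sᶜ g x :=
        TbarOn_univ_le_add_compl hq S
    _ ≤ 2 ^ (k : ℝ) + 2 ^ (k : ℝ) := add_le_add hin.le hout
    _ ≤ 2 ^ ((k : ℝ) + 2) := ENNReal.two_rpow_add_two_rpow_le _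

/-- with the maximum-principle hypotheses, on
`Q ∩ (Ω_{k+2} \ Ω_{k+3})` the inner part over `Q^{(1)}` is at least `2^k`:
`2^k ≤ T̄^in_{Q^{(1)}}(1_{Q^{(1)}} fσ)(x)`. -/
theorem Tbar_inner_lower_bound {d : ℕ} (q : ℝ) (hq : 1 ≤ q)
    (R : ℕ → ℤ × (Fin d → ℤ)) (τ : ℕ → ENNReal)
    (σ f : (Fin d → ℝ) → ENNReal) (hσmeas : Measurable σ) (hσpos : ∀ x, 0 < σ x)
    (hfmeas : Measurable f)
    (k : ℤ) (Q : ℤ × (Fin d → ℤ))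
    (hwhitney : ∃ z ∈ grandparentCubeOf d Q,
      TbarOn d q R τ Set.univ (fun y => f y * σ y) z ≤ (2 : ENNReal) ^ (k : ℝ))
    (x : Fin d → ℝ) (hx : x ∈ cubeOf d Q)
    (hx2 : (2 : ENNReal) ^ ((k : ℝ) + 2) <
      TbarOn d q R τ Set.univ (fun y => f y * σ y) x)
    (hx3 : TbarOn d q R τ Set.univ (fun y => f y * σ y) x ≤
      (2 : ENNReal) ^ ((k : ℝ) + 3)) :
    (2 : ENNReal) ^ (k : ℝ) ≤
      TbarOn d q R τ {n | cubeOf d (R n) ⊆ parentCubeOf d Q}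
        ((parentCubeOf d Q).indicator (fun y => f y * σ y)) x :=
  Tbar_inner_lower_bound_general q hq R τ σ f k Q hwhitney x hx hx2
end
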